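/- Let λ ∈ ℂ \ [−1,1] and n ∈ ℕ. With 𝔤₁⁽ⁿ⁾ = (g_{−n}, g_{−n+1}, …, g_{−1})ᵀ ∈ ℂ^n and 𝔤₂⁽ⁿ⁾ = (g_{−1}, g_{−2}, …, g_{−n})ᵀ ∈ ℂ^n, one has ⟨T_n[φ]⁻¹𝔤₂⁽ⁿ⁾, 𝔤₂⁽ⁿ⁾⟩ = ⟨T_n[φ]⁻¹𝔤₁⁽ⁿ⁾, 𝔤₁⁽ⁿ⁾⟩. -/
import Mathlib


open scoped Matrix

/-- Fourier coefficients of the symbol `g`: `g l = 0` for even `l`,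
    `g l = (−1)^((l−1)/2) · 2/(lπ)` for odd `l`. -/
noncomputable def gcoef (l : ℤ) : ℂ :=
  if Even l then 0 else ((-1 : ℝ) ^ ((l - 1) / 2) * 2 / (l * Real.pi) : ℝ)

/-- The Toeplitz matrix `T_n[φ] = λ I + T_n[g]` of the symbol `φ = g + λ`. -/
noncomputable def Tphi (lam : ℂ) (n : ℕ) : Matrix (Fin n) (Fin n) ℂ :=
  Matrix.of fun j k => (if j = k then lam else 0) + gcoef ((j : ℤ) - (k : ℤ))

/-- The vector `𝔤₁⁽ⁿ⁾ = (g_{−n}, g_{−n+1}, …, g_{−1})ᵀ ∈ ℂ^n`. -/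
noncomputable def gvec1 (n : ℕ) : Fin n → ℂ := fun j => gcoef ((j : ℤ) - (n : ℤ))

/-- The vector `𝔤₂⁽ⁿ⁾ = (g_{−1}, g_{−2}, …, g_{−n})ᵀ ∈ ℂ^n`. -/
noncomputable def gvec2 (n : ℕ) : Fin n → ℂ := fun j => gcoef (-(j : ℤ) - 1)

/-- The bilinear pairing `⟨a, b⟩ = Σ_j a_j b_j`. -/
noncomputable def pairing {n : ℕ} (a b : Fin n → ℂ) : ℂ := ∑ j, a j * b j

/-- `⟨T_n[φ]⁻¹𝔤₂⁽ⁿ⁾, 𝔤₂⁽ⁿ⁾⟩ = ⟨T_n[φ]⁻¹𝔤₁⁽ⁿ⁾, 𝔤₁⁽ⁿ⁾⟩`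
    for `λ ∈ ℂ \ [−1,1]`. -/
theorem pairing_symmetry (lam : ℂ) (hlam : lam ∉ (Complex.ofReal '' Set.Icc (-1 : ℝ) 1))
    (n : ℕ) :
    pairing ((Tphi lam n)⁻¹ *ᵥ gvec2 n) (gvec2 n)
      = pairing ((Tphi lam n)⁻¹ *ᵥ gvec1 n) (gvec1 n) := by
  classical
  set T := Tphi lam n with hT
  have hsub : T.submatrix Fin.rev Fin.rev = Tᵀ := by
    ext j k
    have hj := j.isLt
    have hk := k.isLt
    simp only [Matrix.submatrix_apply, Matrix.transpose_apply, hT, Tphi, Matrix.of_apply]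
    have harg : ((j.rev : ℤ) - (k.rev : ℤ)) = ((k : ℤ) - (j : ℤ)) := by
      simp only [Fin.val_rev]; omega
    by_cases h : j = k
    · subst h; simp [harg]
    · have h' : ¬(j.rev = k.rev) := by simpa [Fin.rev_inj] using h
      rw [if_neg h', if_neg (Ne.symm h), harg]
  have hinvmat : (T⁻¹).submatrix Fin.rev Fin.rev = (T⁻¹)ᵀ := by
    have h2 : (T.submatrix (Fin.revPerm : Fin n ≃ Fin n) (Fin.revPerm : Fin n ≃ Fin n))⁻¹
        = T⁻¹.submatrix (Fin.revPerm : Fin n ≃ Fin n) (Fin.revPerm : Fin n ≃ Fin n) :=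
      Matrix.inv_submatrix_equiv T _ _
    have h3 : T.submatrix (Fin.revPerm : Fin n ≃ Fin n) (Fin.revPerm : Fin n ≃ Fin n)
        = T.submatrix Fin.rev Fin.rev := rfl
    have h4 : T⁻¹.submatrix (Fin.revPerm : Fin n ≃ Fin n) (Fin.revPerm : Fin n ≃ Fin n)
        = T⁻¹.submatrix Fin.rev Fin.rev := rfl
    rw [h3, h4, hsub] at h2
    rw [← h2, ← Matrix.transpose_nonsing_inv]
  have hinv : ∀ j k, T⁻¹ (Fin.rev j) (Fin.rev k) = T⁻¹ k j := by
    intro j k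
    have := congrFun (congrFun hinvmat j) k
    simpa using this
  have hg : ∀ j, gvec2 n (Fin.rev j) = gvec1 n j := by
    intro j
    have hj := j.isLt
    simp only [gvec1, gvec2]
    congr 1
    simp only [Fin.val_rev]
    omega
  simp only [pairing, Matrix.mulVec, dotProduct]
  calc ∑ j, (∑ k, T⁻¹ j k * gvec2 n k) * gvec2 n j
      = ∑ j, (∑ k, T⁻¹ (Fin.rev j) (Fin.rev k) * gvec2 n (Fin.rev k)) * gvec2 n (Fin.rev j) := by
        refine (Fintype.sum_equiv Fin.revPerm _ _ fun j => ?_).symm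
        congr 1
        exact Fintype.sum_equiv Fin.revPerm _ _ fun k => rfl
    _ = ∑ j, (∑ k, T⁻¹ k j * gvec1 n k) * gvec1 n j := by
        simp only [hinv, hg]
    _ = ∑ j, ∑ k, T⁻¹ k j * gvec1 n k * gvec1 n j := by
        simp only [Finset.sum_mul]
    _ = ∑ k, ∑ j, T⁻¹ k j * gvec1 n k * gvec1 n j := Finset.sum_comm
    _ = ∑ j, (∑ k, T⁻¹ j k * gvec1 n k) * gvec1 n j := by
        refine Finset.sum_congr rfl fun k _ => ?_
        rw [Finset.sum_mul]
        exact Finset.sum_congr rfl fun j _ => by ring
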